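/- The function Φ(u) = e^{u/2} · (1/2 + ∑_{n=1}^∞ exp(−π n² e^{2u})) is an even function of u, i.e. Φ(u) = Φ(−u) for all real u. -/
import Mathlib

open Real

noncomputable def Phi (u : ℝ) : ℝ :=
  Real.exp (u / 2) *
    (1 / 2 + ∑' n : ℕ, Real.exp (-π * ((n : ℝ) + 1) ^ 2 * Real.exp (2 * u)))

lemma summable_aux {a : ℝ} (ha : 0 < a) :
    Summable fun n : ℕ => Real.exp (-π * ((n : ℝ) + 1) ^ 2 * a) := by
  have hr : Real.exp (-π * a) < 1 :=
    Real.exp_lt_one_iff.mpr (by nlinarith [Real.pi_pos])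
  refine Summable.of_nonneg_of_le (fun n => (Real.exp_pos _).le)
    (fun n => ?_) (summable_geometric_of_lt_one (Real.exp_pos _).le hr)
  rw [← Real.exp_nat_mul]
  apply Real.exp_le_exp.mpr
  have h : ((n : ℝ)) ≤ ((n : ℝ) + 1) ^ 2 := by nlinarith [Nat.cast_nonneg (α := ℝ) n]
  have := mul_le_mul_of_nonneg_left h (mul_pos Real.pi_pos ha).le
  nlinarith

lemma int_sum_eq (a : ℝ) (ha : 0 < a) :
    (∑' n : ℤ, Real.exp (-π * a * (n : ℝ) ^ 2)) =
      1 + 2 * ∑' n : ℕ, Real.exp (-π * ((n : ℝ) + 1) ^ 2 * a) := by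
  have hs : Summable fun n : ℕ => Real.exp (-π * ((n : ℝ) + 1) ^ 2 * a) := summable_aux ha
  have hs1 : Summable fun n : ℕ => Real.exp (-π * a * ((n : ℝ)) ^ 2) := by
    rw [← summable_nat_add_iff 1]
    refine hs.congr fun n => ?_
    push_cast; ring_nf
  have hs2 : Summable fun n : ℕ => Real.exp (-π * a * ((-((n : ℝ) + 1))) ^ 2) := by
    refine hs.congr fun n => ?_; ring_nf
  rw [tsum_of_nat_of_neg_add_one (hs1.congr fun n => by norm_num)
    (hs2.congr fun n => by push_cast; ring_nf)]
  have h1 : (∑' n : ℕ, Real.exp (-π * a * ((n : ℝ)) ^ 2)) =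
      1 + ∑' n : ℕ, Real.exp (-π * ((n : ℝ) + 1) ^ 2 * a) := by
    rw [Summable.tsum_eq_zero_add hs1]
    simp only [Nat.cast_zero]
    rw [show Real.exp (-π * a * (0:ℝ)^2) = 1 by norm_num]
    congr 1
    exact tsum_congr fun n => by push_cast; ring_nf
  have h2 : (∑' n : ℕ, Real.exp (-π * a * ((-((n:ℤ) + 1) : ℤ) : ℝ) ^ 2)) =
      ∑' n : ℕ, Real.exp (-π * ((n : ℝ) + 1) ^ 2 * a) :=
    tsum_congr fun n => by push_cast; ring_nf
  push_cast
  push_cast at h1 h2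
  rw [h1, h2]; ring

/-- The function `Φ` is even. -/
theorem Phi_even (u : ℝ) : Phi u = Phi (-u) := by
  have key : ∀ v : ℝ, Phi v = Real.exp (v / 2) / 2 *
      ∑' n : ℤ, Real.exp (-π * Real.exp (2 * v) * (n : ℝ) ^ 2) := by
    intro v
    rw [Phi, int_sum_eq _ (Real.exp_pos _)]
    ring
  rw [key u, key (-u)]
  rw [Real.tsum_exp_neg_mul_int_sq (Real.exp_pos (2 * u))]
  have h1 : (Real.exp (2 * u)) ^ (1 / 2 : ℝ) = Real.exp u := by
    rw [← Real.exp_log (Real.exp_pos (2*u))] ; rw [← Real.exp_mul, Real.log_exp]; ring_nf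
  have h2 : ∀ n : ℤ, -π / Real.exp (2 * u) * (n : ℝ) ^ 2
      = -π * Real.exp (2 * -u) * (n : ℝ) ^ 2 := by
    intro n
    rw [div_eq_mul_inv, ← Real.exp_neg]
    ring_nf
  simp_rw [h2]
  rw [h1, ← mul_assoc]
  congr 1
  rw [div_mul_eq_mul_div, mul_one_div, div_div, mul_comm (Real.exp u) 2, ← div_div,
    div_right_comm, ← Real.exp_sub, show u / 2 - u = -u / 2 by ring]
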